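/- arXiv:1912.04198 — 5 statements merged into one kernel-verified Lean document; each statement's English description precedes it below -/
import Mathlib

section
/- For any permutation a of the letters x_2,...,x_{n-1}, the left-nested comb Γ_{1a} = [...[[x_1, x_{a(1)}], x_{a(2)}],..., x_{a(n-2)}] expands in the word basis as Γ_{1a} = Σ_{a ∈ ū⧢v} (-1)^{|u|} u 1 v, where the sum is over all ways of writing a as a shuffle of the reversal ū of a word u with a word v. -/
open scoped BigOperators

/-- `Wd m` : the algebra of formal ℚ-linear combinations of words in letters `x_1,…,x_m`
(represented as `Fin m`), with concatenation product. -/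
abbrev Wd (m : ℕ) := MonoidAlgebra ℚ (FreeMonoid (Fin m))

/-- The word monomial associated to a list of letters. -/
noncomputable def word {m : ℕ} (l : List (Fin m)) : Wd m :=
  MonoidAlgebra.single (FreeMonoid.ofList l) 1

/-- All interleavings (shuffles) of two lists. -/
def shuffles {α : Type*} : List α → List α → List (List α)
  | [], bs => [bs]
  | a :: as, [] => [a :: as]
  | a :: as, b :: bs =>
      (shuffles as (b :: bs)).map (a :: ·) ++ (shuffles (a :: as) bs).map (b :: ·)

/-- The shuffle product of two words, as an element of `Wd m`. -/
noncomputable def shuffleProd {m : ℕ} (a b : List (Fin m)) : Wd m :=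
  ((shuffles a b).map word).sum

/-- Binary trees representing iterated commutators (Lie monomials). -/
inductive LieTree (m : ℕ) where
  | leaf : Fin m → LieTree m
  | node : LieTree m → LieTree m → LieTree m

/-- Expansion of a Lie monomial in the word algebra, via `[u,v] = uv - vu`. -/
noncomputable def LieTree.expand {m : ℕ} : LieTree m → Wd m
  | .leaf i => word [i]
  | .node u v => u.expand * v.expand - v.expand * u.expand

/-- The list of leaf labels of a Lie tree, read left to right. -/
def LieTree.leaves {m : ℕ} : LieTree m → List (Fin m)
  | .leaf i => [i]
  | .node u v => u.leaves ++ v.leaves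

/-- `Lie(m)` : the span of the multilinear Lie monomials (each letter used exactly once). -/
noncomputable def LieSub (m : ℕ) : Submodule ℚ (Wd m) :=
  Submodule.span ℚ
    {x | ∃ T : LieTree m, T.leaves.Perm (List.finRange m) ∧ x = LieTree.expand T}

/-- `W(m)` : the span of the multilinear words (each letter used exactly once). -/
noncomputable def Wsub (m : ℕ) : Submodule ℚ (Wd m) :=
  Submodule.span ℚ {x | ∃ l : List (Fin m), l.Perm (List.finRange m) ∧ x = word l}

/-- `Sh(m)` : the span of nontrivial shuffles of multilinear words. -/
noncomputable def ShSub (m : ℕ) : Submodule ℚ (Wd m) :=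
  Submodule.span ℚ
    {x | ∃ a b : List (Fin m), a ≠ [] ∧ b ≠ [] ∧ (a ++ b).Perm (List.finRange m) ∧
      x = shuffleProd a b}

/-- The left-nested comb `Γ_{1a} = [...[[x_1, a_1], a_2], …]` (the letter `x_1` is `0`). -/
def comb {m : ℕ} [NeZero m] (a : List (Fin m)) : LieTree m :=
  a.foldl (fun t i => LieTree.node t (LieTree.leaf i)) (LieTree.leaf 0)

/-- The finset of permutations of the letters `x_2,…,x_m` (i.e. of `(finRange m).tail`). -/
noncomputable def permsTail (m : ℕ) : Finset (List (Fin m)) :=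
  ((List.finRange m).tail).permutations.toFinset

/-!
Since `Γ_{1(a·i)} = Γ_{1a} x_i - x_i Γ_{1a}` and `x_i ≠ x_1`, the coefficient of `u1v` in
`Γ_{1(a·i)}` is that of `u1v'` in `Γ_{1a}` if `v = v'·i`, minus that of `u'1v` if `u = i·u'`.
The right-hand side `(-1)^{|u|} [a ∈ ū ⧢ v]` obeys the same recursion: `a·i ∈ ū ⧢ v` iff the
last letter `i` is taken from `ū` or from `v`, and multilinearity excludes both at once.
-/

section Lists

variable {α : Type*}

theorem exists_reverse_eq_append_singleton_iff {u : List α} {i : α} {P : List α → Prop} :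
    (∃ p, u.reverse = p ++ [i] ∧ P p) ↔ u.head? = some i ∧ P u.tail.reverse := by
  constructor
  · rintro ⟨p, hp, hP⟩
    obtain rfl : u = i :: p.reverse := by simpa using hp
    simpa using hP
  · rintro ⟨hu, hP⟩
    obtain ⟨t, rfl⟩ := List.head?_eq_some_iff.1 hu
    exact ⟨t.reverse, by simp, hP⟩

theorem exists_eq_append_singleton_iff {v : List α} {i : α} {P : List α → Prop} :
    (∃ q, v = q ++ [i] ∧ P q) ↔ v.getLast? = some i ∧ P v.dropLast := by
  constructor
  · rintro ⟨q, rfl, hP⟩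
    simpa using hP
  · rintro ⟨hv, hP⟩
    obtain ⟨q, rfl⟩ := List.getLast?_eq_some_iff.1 hv
    exact ⟨q, rfl, by simpa using hP⟩

@[simp]
theorem shuffles_nil_left (v : List α) : shuffles [] v = [v] := by
  simp [shuffles]

@[simp]
theorem shuffles_nil_right (p : List α) : shuffles p [] = [p] := by
  cases p <;> simp [shuffles]

theorem nil_mem_shuffles_iff {p v : List α} : [] ∈ shuffles p v ↔ p = [] ∧ v = [] := by
  match p, v with
  | [], _ => simp [eq_comm]
  | _ :: _, [] => simp
  | _ :: _, _ :: _ => simp [shuffles]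

theorem cons_mem_shuffles_iff {p v w : List α} {x : α} :
    x :: w ∈ shuffles p v ↔
      (∃ p', p = x :: p' ∧ w ∈ shuffles p' v) ∨ (∃ v', v = x :: v' ∧ w ∈ shuffles p v') := by
  match p, v with
  | [], _ => simp [eq_comm]
  | _ :: _, [] => simp [eq_comm]
  | _ :: _, _ :: _ => simp [shuffles, and_comm, eq_comm]

theorem mem_shuffles_comm {p v w : List α} : w ∈ shuffles p v ↔ w ∈ shuffles v p := by
  induction w generalizing p v with
  | nil => simp only [nil_mem_shuffles_iff, and_comm]
  | cons x w ih => simp only [cons_mem_shuffles_iff, ih, or_comm]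

theorem perm_append_of_mem_shuffles {p v w : List α} (h : w ∈ shuffles p v) : w.Perm (p ++ v) := by
  induction w generalizing p v with
  | nil => simp [nil_mem_shuffles_iff.1 h]
  | cons x w ih =>
    rcases cons_mem_shuffles_iff.1 h with ⟨p, rfl, hw⟩ | ⟨v, rfl, hw⟩
    · exact (ih hw).cons x
    · exact ((ih hw).cons x).trans List.perm_middle.symm

theorem append_singleton_mem_shuffles_append_singleton {p v w : List α} (x : α)
    (h : w ∈ shuffles p v) : w ++ [x] ∈ shuffles (p ++ [x]) v := by
  induction w generalizing p v with
  | nil => simp [nil_mem_shuffles_iff.1 h]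
  | cons y w ih =>
    rw [List.cons_append, cons_mem_shuffles_iff]
    rcases cons_mem_shuffles_iff.1 h with ⟨p, rfl, hw⟩ | ⟨v, rfl, hw⟩
    · exact Or.inl ⟨p ++ [x], rfl, ih hw⟩
    · exact Or.inr ⟨v, rfl, ih hw⟩

theorem reverse_mem_shuffles_reverse {p v w : List α} (h : w ∈ shuffles p v) :
    w.reverse ∈ shuffles p.reverse v.reverse := by
  induction w generalizing p v with
  | nil => simp [nil_mem_shuffles_iff.1 h]
  | cons x w ih =>
    rw [List.reverse_cons]
    rcases cons_mem_shuffles_iff.1 h with ⟨p, rfl, hw⟩ | ⟨v, rfl, hw⟩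
    · simpa using append_singleton_mem_shuffles_append_singleton x (ih hw)
    · simpa [mem_shuffles_comm (p := p.reverse)] using
        append_singleton_mem_shuffles_append_singleton x (mem_shuffles_comm.1 (ih hw))

theorem reverse_mem_shuffles_iff {p v w : List α} :
    w.reverse ∈ shuffles p v ↔ w ∈ shuffles p.reverse v.reverse :=
  ⟨fun h => by simpa using reverse_mem_shuffles_reverse h,
    fun h => by simpa using reverse_mem_shuffles_reverse h⟩

theorem append_singleton_mem_shuffles_iff {p v w : List α} {x : α} :
    w ++ [x] ∈ shuffles p v ↔
      (∃ p', p = p' ++ [x] ∧ w ∈ shuffles p' v) ∨ (∃ v', v = v' ++ [x] ∧ w ∈ shuffles p v') := by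
  rw [← List.reverse_reverse (w ++ [x]), reverse_mem_shuffles_iff]
  simp only [List.reverse_append, List.reverse_singleton, List.singleton_append,
    cons_mem_shuffles_iff, List.reverse_eq_cons_iff, reverse_mem_shuffles_iff,
    List.reverse_reverse]
  exact or_congr
    (List.reverse_surjective.exists (p := fun q => p = q ++ [x] ∧ w ∈ shuffles q v)).symm
    (List.reverse_surjective.exists (p := fun q => v = q ++ [x] ∧ w ∈ shuffles p q)).symm

end Lists

section ShuffleSign

variable {α : Type*} [DecidableEq α]

def shuffleSign (a u v : List α) : ℚ :=
  if a ∈ shuffles u.reverse v then (-1) ^ u.length else 0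

theorem shuffleSign_nil (u v : List α) : shuffleSign [] u v = if u = [] ∧ v = [] then 1 else 0 := by
  by_cases h : u = [] ∧ v = []
  · simp [shuffleSign, h]
  · simp [shuffleSign, nil_mem_shuffles_iff, h]

theorem shuffleSign_append_singleton {a : List α} {i : α} (ha : (a ++ [i]).Nodup) (u v : List α) :
    shuffleSign (a ++ [i]) u v =
      (if v.getLast? = some i then shuffleSign a u v.dropLast else 0) -
        (if u.head? = some i then shuffleSign a u.tail v else 0) := by
  have hi : i ∉ a := (List.nodup_cons.1 (List.nodup_append_comm.1 ha)).1
  have not_mem_shuffles {p q : List α} (hpq : i ∈ p ++ q) : a ∉ shuffles p q := fun hm =>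
    hi ((perm_append_of_mem_shuffles hm).mem_iff.2 hpq)
  unfold shuffleSign
  simp only [append_singleton_mem_shuffles_iff, exists_reverse_eq_append_singleton_iff,
    exists_eq_append_singleton_iff]
  by_cases hu : u.head? = some i <;> by_cases hv : v.getLast? = some i
  · -- `i` would occur in both `u` and `v`, hence twice in `a ++ [i]`
    have hiu : i ∈ u := List.mem_of_head? hu
    have hiv : i ∈ v := List.mem_of_getLast? hv
    simp [hu, hv, not_mem_shuffles (p := u.tail.reverse) (List.mem_append_right _ hiv),
      not_mem_shuffles (p := u.reverse) (List.mem_append_left _ (List.mem_reverse.2 hiu))]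
  · obtain ⟨t, rfl⟩ := List.head?_eq_some_iff.1 hu
    simp only [hv, List.head?_cons, List.tail_cons, List.length_cons, pow_succ]
    split_ifs <;> simp_all
  · simp [hu, hv]
  · simp [hu, hv]

end ShuffleSign

section WordAlgebra

variable {m : ℕ}

theorem coeff_mul_word_singleton_append_singleton (f : Wd m) (w : List (Fin m)) (i y : Fin m) :
    (f * word [i]).coeff (FreeMonoid.ofList (w ++ [y])) =
      if y = i then f.coeff (FreeMonoid.ofList w) else 0 := by
  split_ifs with h
  · rw [h, word, FreeMonoid.ofList_append, MonoidAlgebra.coeff_mul_single_mul, mul_one]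
  · refine MonoidAlgebra.coeff_mul_single_of_forall_mul_ne _ _ fun d hd => h ?_
    have hd' : d.toList = w ∧ i = y := by simpa using congrArg FreeMonoid.toList hd
    exact hd'.2.symm

theorem coeff_word_singleton_mul_cons (f : Wd m) (w : List (Fin m)) (i y : Fin m) :
    (word [i] * f).coeff (FreeMonoid.ofList (y :: w)) =
      if y = i then f.coeff (FreeMonoid.ofList w) else 0 := by
  split_ifs with h
  · rw [h, word]
    exact (MonoidAlgebra.coeff_single_mul_mul f 1 _ (FreeMonoid.ofList w)).trans (one_mul _)
  · refine MonoidAlgebra.coeff_single_mul_of_forall_mul_ne _ _ fun d hd => h ?_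
    have hd' : i = y ∧ d.toList = w := by simpa using congrArg FreeMonoid.toList hd
    exact hd'.1.symm

theorem coeff_mul_word_singleton_of_ne (f : Wd m) {z i : Fin m} (hz : z ≠ i) (u v : List (Fin m)) :
    (f * word [i]).coeff (FreeMonoid.ofList (u ++ z :: v)) =
      if v.getLast? = some i then f.coeff (FreeMonoid.ofList (u ++ z :: v.dropLast)) else 0 := by
  rcases v.eq_nil_or_concat' with rfl | ⟨v, y, rfl⟩
  · simpa [hz] using coeff_mul_word_singleton_append_singleton f u i z
  · simpa using coeff_mul_word_singleton_append_singleton f (u ++ z :: v) i y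

theorem coeff_word_singleton_mul_of_ne (f : Wd m) {z i : Fin m} (hz : z ≠ i) (u v : List (Fin m)) :
    (word [i] * f).coeff (FreeMonoid.ofList (u ++ z :: v)) =
      if u.head? = some i then f.coeff (FreeMonoid.ofList (u.tail ++ z :: v)) else 0 := by
  cases u with
  | nil => simpa [hz] using coeff_word_singleton_mul_cons f v i z
  | cons x u => simpa using coeff_word_singleton_mul_cons f (u ++ z :: v) i x

end WordAlgebra

theorem comb_append_singleton {m : ℕ} [NeZero m] (a : List (Fin m)) (i : Fin m) :
    comb (a ++ [i]) = .node (comb a) (.leaf i) := by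
  simp [comb]

theorem coeff_expand_comb {m : ℕ} [NeZero m] {a : List (Fin m)} (ha : ((0 : Fin m) :: a).Nodup)
    (u v : List (Fin m)) :
    (comb a).expand.coeff (FreeMonoid.ofList (u ++ 0 :: v)) = shuffleSign a u v := by
  induction a using List.reverseRecOn generalizing u v with
  | nil =>
    classical
    rw [shuffleSign_nil, comb, List.foldl_nil, LieTree.expand, word, MonoidAlgebra.coeff_single,
      Finsupp.single_apply]
    refine if_congr ?_ rfl rfl
    rw [FreeMonoid.ofList.injective.eq_iff]
    simp [List.singleton_eq_append_iff]
  | append_singleton a i ih =>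
    have hi : (0 : Fin m) ≠ i := by
      rintro rfl
      simp at ha
    rw [← List.cons_append] at ha
    rw [comb_append_singleton, LieTree.expand, LieTree.expand, MonoidAlgebra.coeff_sub,
      Finsupp.sub_apply, coeff_mul_word_singleton_of_ne _ hi, coeff_word_singleton_mul_of_ne _ hi,
      ih ha.of_append_left, ih ha.of_append_left, shuffleSign_append_singleton ha.of_cons]

theorem stmt3_general (n : ℕ) [NeZero (n - 1)] (a : List (Fin (n - 1)))
    (ha : ((0 : Fin (n - 1)) :: a).Perm (List.finRange (n - 1)))
    (u v : List (Fin (n - 1))) :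
    (comb a).expand.coeff (FreeMonoid.ofList (u ++ (0 : Fin (n - 1)) :: v)) =
      if a ∈ shuffles u.reverse v then (-1 : ℚ) ^ u.length else 0 :=
  coeff_expand_comb (ha.nodup_iff.2 (List.nodup_finRange _)) u v

/-- the comb `Γ_{1a}` expands as `Σ_{a ∈ ū⧢v} (-1)^{|u|} u1v`; equivalently,
for words `u`, `v` not containing the letter `x_1 = 0`, the coefficient of the word `u1v`
in `Γ_{1a}` is `(-1)^{|u|}` if `a` is a shuffle of the reversal `ū` with `v`, and `0`
otherwise. -/
theorem stmt3 (n : ℕ) [NeZero (n - 1)] (a : List (Fin (n - 1)))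
    (ha : ((0 : Fin (n - 1)) :: a).Perm (List.finRange (n - 1)))
    (u v : List (Fin (n - 1))) (hu : (0 : Fin (n - 1)) ∉ u) (hv : (0 : Fin (n - 1)) ∉ v) :
    (comb a).expand.coeff (FreeMonoid.ofList (u ++ (0 : Fin (n - 1)) :: v)) =
      if a ∈ shuffles u.reverse v then (-1 : ℚ) ^ u.length else 0 :=
  stmt3_general n a ha u v
end

section
/- The coefficient (Γ, a) of a word a in a Lie monomial Γ is zero unless the rooted trivalent tree corresponding to Γ admits a planar embedding with boundary ordering given by the word a followed by the root; when it does, (Γ, a) = ±1 according to the parity of the number of flips relating that embedding to a reference embedding. -/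
open scoped BigOperators

/-- The signed planar embeddings of a Lie tree: each embedding is a word (the boundary order
of the leaves) together with a sign recording the parity of the number of flips relative to
the reference embedding given by the tree itself. -/
def LieTree.embeddings {m : ℕ} : LieTree m → List (List (Fin m) × ℚ)
  | .leaf i => [([i], 1)]
  | .node u v =>
      u.embeddings.flatMap fun p =>
        v.embeddings.flatMap fun q =>
          [(p.1 ++ q.1, p.2 * q.2), (q.1 ++ p.1, -(p.2 * q.2))]

section Stmt9Aux

variable {m : ℕ}

private lemma list_sum_apply' (L : List (Wd m)) (a : FreeMonoid (Fin m)) :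
    L.sum.coeff a = (L.map fun x => x.coeff a).sum := by
  induction L with
  | nil => rfl
  | cons h t ih =>
    simp only [List.sum_cons, List.map_cons, ← ih]
    rw [MonoidAlgebra.coeff_add]
    exact Finsupp.add_apply _ _ _

private lemma sum_flatMap' {α β : Type*} (L : List α) (F : α → List β) (f : β → ℚ) :
    ((L.flatMap F).map f).sum = (L.map fun x => ((F x).map f).sum).sum := by
  induction L with
  | nil => rfl
  | cons h t ih => simp [List.flatMap_cons, ih]

/-- the coefficient of `a` in the formal sum described by `L`. -/
noncomputable def coeff (L : List (List (Fin m) × ℚ)) (a : List (Fin m)) : ℚ :=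
  (L.map fun p => if p.1 = a then p.2 else 0).sum

private lemma emb_perm {T : LieTree m} {w : List (Fin m)} {s : ℚ}
    (h : (w, s) ∈ T.embeddings) : w.Perm T.leaves := by
  induction T generalizing w s with
  | leaf i =>
    simp only [LieTree.embeddings, List.mem_singleton, Prod.mk.injEq] at h
    simp [h.1, LieTree.leaves]
  | node u v ihu ihv =>
    simp only [LieTree.embeddings, List.mem_flatMap] at h
    obtain ⟨p, hp, q, hq, hmem⟩ := h
    simp only [List.mem_cons, List.mem_singleton, Prod.mk.injEq, List.not_mem_nil,
      or_false] at hmem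
    rcases hmem with ⟨hw, _⟩ | ⟨hw, _⟩ <;> subst hw <;> simp only [LieTree.leaves]
    · exact (ihu hp).append (ihv hq)
    · exact ((ihv hq).append (ihu hp)).trans List.perm_append_comm

private lemma emb_sign' {T : LieTree m} {w : List (Fin m)} {s : ℚ}
    (h : (w, s) ∈ T.embeddings) : s = 1 ∨ s = -1 := by
  induction T generalizing w s with
  | leaf i =>
    simp only [LieTree.embeddings, List.mem_singleton, Prod.mk.injEq] at h
    exact Or.inl h.2
  | node u v ihu ihv =>
    simp only [LieTree.embeddings, List.mem_flatMap] at h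
    obtain ⟨p, hp, q, hq, hmem⟩ := h
    simp only [List.mem_cons, List.mem_singleton, Prod.mk.injEq, List.not_mem_nil,
      or_false] at hmem
    rcases ihu hp with h1 | h1 <;> rcases ihv hq with h2 | h2 <;>
      rcases hmem with ⟨_, hs⟩ | ⟨_, hs⟩ <;> subst hs <;> rw [h1, h2] <;> norm_num

private lemma leaves_ne_nil (T : LieTree m) : T.leaves ≠ [] := by
  induction T with
  | leaf i => simp [LieTree.leaves]
  | node u v ihu ihv => simp [LieTree.leaves, ihu]

private lemma emb_ne_nil {T : LieTree m} {w : List (Fin m)} {s : ℚ}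
    (h : (w, s) ∈ T.embeddings) : w ≠ [] := by
  intro hw
  subst hw
  exact leaves_ne_nil T (emb_perm h).symm.eq_nil

private lemma sum_comm_key {α β R : Type*} [Ring R] (B : List β) (g : β → R) (c : R) :
    (B.flatMap fun y => [c * g y, -(g y * c)]).sum
      = c * (B.map g).sum - (B.map g).sum * c := by
  induction B with
  | nil => simp
  | cons b bs ih =>
    simp only [List.flatMap_cons, List.sum_append, List.map_cons, List.sum_cons,
      List.sum_nil, ih]
    noncomm_ring

private lemma sum_comm_key2 {α β R : Type*} [Ring R] (A : List α) (B : List β)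
    (f : α → R) (g : β → R) :
    (A.flatMap fun x => B.flatMap fun y => [f x * g y, -(g y * f x)]).sum
      = (A.map f).sum * (B.map g).sum - (B.map g).sum * (A.map f).sum := by
  induction A with
  | nil => simp
  | cons a as ih =>
    simp only [List.flatMap_cons, List.sum_append, List.map_cons, List.sum_cons, ih,
      List.sum_nil, sum_comm_key (α := α) B g (f a)]
    noncomm_ring

private lemma word_mul (p q : List (Fin m)) : word p * word q = word (p ++ q) := by
  rw [word, word, word, MonoidAlgebra.single_mul_single, mul_one, FreeMonoid.ofList_append]

private lemma expand_eq_sum (T : LieTree m) :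
    T.expand = (T.embeddings.map fun p => p.2 • word p.1).sum := by
  induction T with
  | leaf i => simp [LieTree.expand, LieTree.embeddings]
  | node u v ihu ihv =>
    rw [LieTree.expand, ihu, ihv, LieTree.embeddings]
    have hmap : ((u.embeddings.flatMap fun p => v.embeddings.flatMap fun q =>
          [(p.1 ++ q.1, p.2 * q.2), (q.1 ++ p.1, -(p.2 * q.2))]).map
            fun p => p.2 • word p.1)
        = u.embeddings.flatMap fun p => v.embeddings.flatMap fun q =>
            [(p.2 • word p.1) * (q.2 • word q.1), -((q.2 • word q.1) * (p.2 • word p.1))] := by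
      rw [List.map_flatMap]
      congr 1
      funext p
      rw [List.map_flatMap]
      congr 1
      funext q
      simp only [List.map_cons, List.map_nil, smul_mul_smul_comm, word_mul, neg_smul,
        mul_comm q.2 p.2]
    rw [hmap, sum_comm_key2]

private lemma expand_apply (T : LieTree m) (a : List (Fin m)) :
    T.expand.coeff (FreeMonoid.ofList a) = coeff T.embeddings a := by
  rw [expand_eq_sum, list_sum_apply', coeff, List.map_map]
  apply congrArg
  apply List.map_congr_left
  intro p _
  by_cases h : p.1 = a
  · subst h
    simp [word, MonoidAlgebra.coeff_smul, MonoidAlgebra.coeff_single, Finsupp.smul_apply, Finsupp.single_eq_same]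
  · have hne : FreeMonoid.ofList p.1 ≠ FreeMonoid.ofList a :=
      fun he => h (FreeMonoid.ofList.injective he)
    simp [word, MonoidAlgebra.coeff_smul, MonoidAlgebra.coeff_single, Finsupp.smul_apply, Finsupp.single_eq_of_ne hne, h]

private lemma coeff_flatMap {α : Type*} (L : List α) (F : α → List (List (Fin m) × ℚ))
    (a : List (Fin m)) :
    coeff (L.flatMap F) a = (L.map fun x => coeff (F x) a).sum := by
  rw [coeff, sum_flatMap']
  rfl

private lemma coeff_not_mem {L : List (List (Fin m) × ℚ)} {a : List (Fin m)}
    (h : ∀ s, (a, s) ∉ L) : coeff L a = 0 := by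
  apply List.sum_eq_zero
  intro x hx
  obtain ⟨p, hp, rfl⟩ := List.mem_map.1 hx
  rw [if_neg]
  intro he
  exact h p.2 (by rw [← he]; exact hp)

private lemma sum_map_neg {α : Type*} (L : List α) (f : α → ℚ) :
    (L.map fun x => -f x).sum = -(L.map f).sum := by
  induction L with
  | nil => simp
  | cons h t ih =>
    simp only [List.map_cons, List.sum_cons, ih]
    ring

private lemma coeff_emb {T : LieTree m} (hN : T.leaves.Nodup) {a : List (Fin m)} {s : ℚ}
    (h : (a, s) ∈ T.embeddings) : coeff T.embeddings a = s := by
  induction T generalizing a s with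
  | leaf i =>
    simp only [LieTree.embeddings, List.mem_singleton, Prod.mk.injEq] at h
    simp [coeff, LieTree.embeddings, h.1, h.2]
  | node u v ihu ihv =>
    rw [LieTree.leaves, List.nodup_append] at hN
    obtain ⟨hu, hv, hdisj⟩ := hN
    simp only [LieTree.embeddings, List.mem_flatMap] at h
    obtain ⟨p₀, hp₀, q₀, hq₀, hmem⟩ := h
    simp only [List.mem_cons, List.mem_singleton, Prod.mk.injEq, List.not_mem_nil,
      or_false] at hmem
    -- lengths and heads facts
    have hlenu : ∀ p ∈ u.embeddings, (p : List (Fin m) × ℚ).1.length = u.leaves.length :=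
      fun p hp => (emb_perm hp).length_eq
    have hlenv : ∀ q ∈ v.embeddings, (q : List (Fin m) × ℚ).1.length = v.leaves.length :=
      fun q hq => (emb_perm hq).length_eq
    have hcoeff : coeff (LieTree.node u v).embeddings a
        = (u.embeddings.map fun p => (v.embeddings.map fun q =>
            ((if p.1 ++ q.1 = a then p.2 * q.2 else 0)
              + (if q.1 ++ p.1 = a then -(p.2 * q.2) else 0))).sum).sum := by
      rw [LieTree.embeddings, coeff_flatMap]
      apply congrArg
      apply List.map_congr_left
      intro p _
      rw [coeff_flatMap]
      apply congrArg
      apply List.map_congr_left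
      intro q _
      simp [coeff]
    rcases hmem with ⟨ha, hs⟩ | ⟨ha, hs⟩
    · -- a = p₀.1 ++ q₀.1
      subst ha; subst hs
      have hterm : ∀ p ∈ u.embeddings, ∀ q ∈ v.embeddings,
          ((if p.1 ++ q.1 = p₀.1 ++ q₀.1 then p.2 * q.2 else 0)
            + (if q.1 ++ p.1 = p₀.1 ++ q₀.1 then -(p.2 * q.2) else 0))
          = (if p.1 = p₀.1 then p.2 else 0) * (if q.1 = q₀.1 then q.2 else 0) := by
        intro p hp q hq
        have hne : q.1 ++ p.1 ≠ p₀.1 ++ q₀.1 := by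
          intro he
          obtain ⟨y, ys, hy⟩ := List.exists_cons_of_ne_nil (emb_ne_nil hq)
          obtain ⟨x, xs, hx⟩ := List.exists_cons_of_ne_nil (emb_ne_nil hp₀)
          rw [hy, hx, List.cons_append, List.cons_append, List.cons.injEq] at he
          have hyv : y ∈ v.leaves := (emb_perm hq).mem_iff.1 (by rw [hy]; exact List.mem_cons_self)
          have hxu : x ∈ u.leaves := (emb_perm hp₀).mem_iff.1 (by rw [hx]; exact List.mem_cons_self)
          exact hdisj x hxu x (he.1 ▸ hyv) rfl
        rw [if_neg hne, add_zero]
        by_cases h1 : p.1 = p₀.1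
        · by_cases h2 : q.1 = q₀.1
          · rw [if_pos (by rw [h1, h2]), if_pos h1, if_pos h2]
          · rw [if_neg (fun he => h2 (List.append_inj he
              (by rw [hlenu p hp, hlenu p₀ hp₀])).2), if_neg h2, mul_zero]
        · rw [if_neg (fun he => h1 (List.append_inj he
            (by rw [hlenu p hp, hlenu p₀ hp₀])).1), if_neg h1, zero_mul]
      rw [hcoeff]
      have : (u.embeddings.map fun p => (v.embeddings.map fun q =>
            ((if p.1 ++ q.1 = p₀.1 ++ q₀.1 then p.2 * q.2 else 0)
              + (if q.1 ++ p.1 = p₀.1 ++ q₀.1 then -(p.2 * q.2) else 0))).sum).sum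
          = (u.embeddings.map fun p => (if p.1 = p₀.1 then p.2 else 0)
              * (v.embeddings.map fun q => (if q.1 = q₀.1 then q.2 else 0)).sum).sum := by
        apply congrArg
        apply List.map_congr_left
        intro p hp
        rw [← List.sum_map_mul_left]
        exact congrArg _ (List.map_congr_left fun q hq => hterm p hp q hq)
      rw [this, List.sum_map_mul_right]
      have e1 : ((u.embeddings.map fun p => if p.1 = p₀.1 then p.2 else 0).sum) = p₀.2 :=
        ihu hu hp₀
      have e2 : ((v.embeddings.map fun q => if q.1 = q₀.1 then q.2 else 0).sum) = q₀.2 :=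
        ihv hv hq₀
      rw [e1, e2]
    · -- a = q₀.1 ++ p₀.1
      subst ha; subst hs
      have hterm : ∀ p ∈ u.embeddings, ∀ q ∈ v.embeddings,
          ((if p.1 ++ q.1 = q₀.1 ++ p₀.1 then p.2 * q.2 else 0)
            + (if q.1 ++ p.1 = q₀.1 ++ p₀.1 then -(p.2 * q.2) else 0))
          = -((if p.1 = p₀.1 then p.2 else 0) * (if q.1 = q₀.1 then q.2 else 0)) := by
        intro p hp q hq
        have hne : p.1 ++ q.1 ≠ q₀.1 ++ p₀.1 := by
          intro he
          obtain ⟨y, ys, hy⟩ := List.exists_cons_of_ne_nil (emb_ne_nil hp)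
          obtain ⟨x, xs, hx⟩ := List.exists_cons_of_ne_nil (emb_ne_nil hq₀)
          rw [hy, hx, List.cons_append, List.cons_append, List.cons.injEq] at he
          have hyu : y ∈ u.leaves := (emb_perm hp).mem_iff.1 (by rw [hy]; exact List.mem_cons_self)
          have hxv : x ∈ v.leaves := (emb_perm hq₀).mem_iff.1 (by rw [hx]; exact List.mem_cons_self)
          exact hdisj y hyu y (he.1 ▸ hxv : y ∈ v.leaves) rfl
        rw [if_neg hne, zero_add]
        by_cases h2 : q.1 = q₀.1
        · by_cases h1 : p.1 = p₀.1
          · rw [if_pos (by rw [h1, h2]), if_pos h1, if_pos h2]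
          · rw [if_neg (fun he => h1 (List.append_inj he
              (by rw [hlenv q hq, hlenv q₀ hq₀])).2), if_neg h1, zero_mul, neg_zero]
        · rw [if_neg (fun he => h2 (List.append_inj he
            (by rw [hlenv q hq, hlenv q₀ hq₀])).1), if_neg h2, mul_zero, neg_zero]
      rw [hcoeff]
      have : (u.embeddings.map fun p => (v.embeddings.map fun q =>
            ((if p.1 ++ q.1 = q₀.1 ++ p₀.1 then p.2 * q.2 else 0)
              + (if q.1 ++ p.1 = q₀.1 ++ p₀.1 then -(p.2 * q.2) else 0))).sum).sum
          = (u.embeddings.map fun p => (if p.1 = p₀.1 then -p.2 else 0)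
              * (v.embeddings.map fun q => (if q.1 = q₀.1 then q.2 else 0)).sum).sum := by
        apply congrArg
        apply List.map_congr_left
        intro p hp
        rw [← List.sum_map_mul_left]
        apply congrArg
        apply List.map_congr_left
        intro q hq
        rw [hterm p hp q hq]
        by_cases h1 : p.1 = p₀.1 <;> by_cases h2 : q.1 = q₀.1 <;>
          simp [h1, h2]
      rw [this, List.sum_map_mul_right]
      have e2 : ((v.embeddings.map fun q => if q.1 = q₀.1 then q.2 else 0).sum) = q₀.2 :=
        ihv hv hq₀
      have e1 : ((u.embeddings.map fun p => if p.1 = p₀.1 then -p.2 else 0).sum) = -p₀.2 := by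
        have : (u.embeddings.map fun p => if p.1 = p₀.1 then -p.2 else 0)
            = (u.embeddings.map fun p => -(if p.1 = p₀.1 then p.2 else 0)) := by
          apply List.map_congr_left
          intro p _
          by_cases h1 : p.1 = p₀.1 <;> simp [h1]
        rw [this, sum_map_neg]
        have h1 := ihu hu hp₀
        rw [coeff] at h1
        rw [h1]
      rw [e1, e2]
      ring

end Stmt9Aux

/-- for a multilinear Lie monomial `Γ`, the coefficient `(Γ, a)` is nonzero iff
the rooted trivalent tree of `Γ` admits a planar embedding whose boundary ordering is the
word `a` (followed by the root); and in that case `(Γ, a) = ±1`, the sign being the parity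
of the number of flips relating the embedding to the reference embedding. -/
theorem stmt9 (n : ℕ) (T : LieTree (n - 1))
    (hT : T.leaves.Perm (List.finRange (n - 1))) (a : List (Fin (n - 1))) :
    (T.expand.coeff (FreeMonoid.ofList a) ≠ 0 ↔ ∃ s : ℚ, (a, s) ∈ T.embeddings)
    ∧ ∀ s : ℚ, (a, s) ∈ T.embeddings →
        T.expand.coeff (FreeMonoid.ofList a) = s ∧ (s = 1 ∨ s = -1) := by
  have hN : T.leaves.Nodup := hT.symm.nodup (List.nodup_finRange _)
  constructor
  · constructor
    · intro hne
      by_contra hno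
      push_neg at hno
      exact hne (by rw [expand_apply, coeff_not_mem hno])
    · rintro ⟨s, hs⟩
      rw [expand_apply, coeff_emb hN hs]
      rcases emb_sign' hs with h | h <;> rw [h] <;> norm_num
  · intro s hs
    exact ⟨by rw [expand_apply, coeff_emb hN hs], emb_sign' hs⟩
end

section
/- The Parke–Taylor forms PT_a = d^{n-3}σ / ∏_{i=1}^{n-2} (σ_{a(i)} - σ_{a(i+1)}), for permutations a of {1,...,n-1} with gauge fixing (σ_1, σ_{n-1}, σ_n) = (0, 1, ∞), satisfy the shuffle relations PT_{b⧢c} = 0 for any nonempty words b, c, where PT is extended linearly over formal sums of words. -/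
/-- The Parke–Taylor function of a word `a` in the letters `1,…,n-1` (represented by
`Fin (n-1)`), in the gauge `σ_n = ∞`: `PT_a = 1 / ∏_i (σ_{a(i)} - σ_{a(i+1)})`. -/
noncomputable def PTfun {m : ℕ} (σ : Fin m → ℂ) (a : List (Fin m)) : ℂ :=
  (((a.zip a.tail).map fun p => σ p.1 - σ p.2).prod)⁻¹

/-- Auxiliary "anchored" Parke–Taylor function with an extra marked point `z`:
`Fa z w = 1/((z - σ w₁)(σ w₁ - σ w₂)⋯)`. -/
noncomputable def Fa {m : ℕ} (σ : Fin m → ℂ) : ℂ → List (Fin m) → ℂ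
  | _, [] => 1
  | z, x :: w => (z - σ x)⁻¹ * Fa σ (σ x) w

lemma PTfun_cons {m : ℕ} (σ : Fin m → ℂ) (x y : Fin m) (w : List (Fin m)) :
    PTfun σ (x :: y :: w) = (σ x - σ y)⁻¹ * PTfun σ (y :: w) := by
  simp [PTfun, mul_inv, mul_comm]

lemma Fa_eq {m : ℕ} (σ : Fin m → ℂ) (x : Fin m) (w : List (Fin m)) (z : ℂ) :
    Fa σ z (x :: w) = (z - σ x)⁻¹ * PTfun σ (x :: w) := by
  induction w generalizing x z with
  | nil => simp [Fa, PTfun]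
  | cons y w ih => rw [Fa, ih, PTfun_cons]

/-- The anchored Parke–Taylor function is multiplicative on shuffles:
`Fa z (b ⧢ c) = Fa z b * Fa z c` (for distinct points). -/
lemma shuffleF {m : ℕ} (σ : Fin m → ℂ) (b c : List (Fin m)) :
    ∀ z : ℂ, ((b ++ c).map σ).Nodup → z ∉ (b ++ c).map σ →
      ((shuffles b c).map (Fa σ z)).sum = Fa σ z b * Fa σ z c := by
  induction b, c using shuffles.induct with
  | case1 bs => intro z _ _; simp [shuffles, Fa]
  | case2 a as => intro z _ _; simp [shuffles, Fa]
  | case3 x as y bs ih1 ih2 =>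
    intro z hnd hz
    have h2 : ((y :: ((x :: as) ++ bs)).map σ).Nodup := ((List.perm_middle).map σ).nodup hnd
    rw [List.map_cons, List.nodup_cons] at h2
    obtain ⟨hy2, hnd2⟩ := h2
    rw [List.cons_append, List.map_cons, List.nodup_cons] at hnd
    obtain ⟨hx1, hnd1⟩ := hnd
    have hxy : σ x ≠ σ y := by
      intro e; exact hx1 (by rw [e]; simp)
    have hzx : z ≠ σ x := by intro e; exact hz (by rw [e]; simp)
    have hzy : z ≠ σ y := by intro e; exact hz (by rw [e]; simp)
    rw [shuffles, List.map_append, List.sum_append, List.map_map, List.map_map]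
    have e1 : Fa σ z ∘ (x :: ·) = fun w => (z - σ x)⁻¹ * Fa σ (σ x) w := by
      funext w; simp [Fa]
    have e2 : Fa σ z ∘ (y :: ·) = fun w => (z - σ y)⁻¹ * Fa σ (σ y) w := by
      funext w; simp [Fa]
    rw [e1, e2, List.sum_map_mul_left, List.sum_map_mul_left,
      ih1 (σ x) hnd1 hx1, ih2 (σ y) hnd2 hy2]
    simp only [Fa]
    have h1 : z - σ x ≠ 0 := sub_ne_zero.mpr hzx
    have h2 : z - σ y ≠ 0 := sub_ne_zero.mpr hzy
    have h3 : σ x - σ y ≠ 0 := sub_ne_zero.mpr hxy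
    have h4 : σ y - σ x ≠ 0 := sub_ne_zero.mpr hxy.symm
    field_simp
    ring

/-- the Parke–Taylor forms satisfy the shuffle relations `PT_{b⧢c} = 0`
for nonempty words `b`, `c`: as rational functions of the (distinct) points `σ`, the sum
over all shuffles of `b` and `c` of `PT` vanishes identically. -/
theorem stmt14 (n : ℕ) (σ : Fin (n - 1) → ℂ) (hσ : Function.Injective σ)
    (b c : List (Fin (n - 1))) (hb : b ≠ []) (hc : c ≠ [])
    (h : (b ++ c).Perm (List.finRange (n - 1))) :
    ((shuffles b c).map (PTfun σ)).sum = 0 := by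
  obtain ⟨x, as, rfl⟩ := List.exists_cons_of_ne_nil hb
  obtain ⟨y, bs, rfl⟩ := List.exists_cons_of_ne_nil hc
  have hnd : (((x :: as) ++ (y :: bs)).map σ).Nodup :=
    ((h.nodup_iff).mpr (List.nodup_finRange _)).map hσ
  set A : ℂ := ((shuffles as (y :: bs)).map fun w => PTfun σ (x :: w)).sum with hA
  set B : ℂ := ((shuffles (x :: as) bs).map fun w => PTfun σ (y :: w)).sum with hB
  have key : ∀ z : ℂ, z ∉ ((x :: as) ++ (y :: bs)).map σ →
      A * (z - σ y) + B * (z - σ x)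
        = PTfun σ (x :: as) * PTfun σ (y :: bs) := by
    intro z hz
    have hzx : z ≠ σ x := by intro e; exact hz (by rw [e]; simp)
    have hzy : z ≠ σ y := by intro e; exact hz (by rw [e]; simp)
    have h1 : z - σ x ≠ 0 := sub_ne_zero.mpr hzx
    have h2 : z - σ y ≠ 0 := sub_ne_zero.mpr hzy
    have main := shuffleF σ (x :: as) (y :: bs) z hnd hz
    rw [shuffles, List.map_append, List.sum_append, List.map_map, List.map_map] at main
    have e1 : Fa σ z ∘ (x :: ·) = fun w => (z - σ x)⁻¹ * PTfun σ (x :: w) := by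
      funext w; exact Fa_eq σ x w z
    have e2 : Fa σ z ∘ (y :: ·) = fun w => (z - σ y)⁻¹ * PTfun σ (y :: w) := by
      funext w; exact Fa_eq σ y w z
    rw [e1, e2, List.sum_map_mul_left, List.sum_map_mul_left, ← hA, ← hB,
      Fa_eq, Fa_eq] at main
    field_simp at main
    linear_combination main
  have hinf := Set.Finite.infinite_compl (((x :: as) ++ (y :: bs)).map σ).finite_toSet
  obtain ⟨z₁, hz₁⟩ := hinf.nonempty
  obtain ⟨z₂, hz₂, hne⟩ := hinf.nontrivial.exists_ne z₁
  have k1 := key z₁ (by simpa using hz₁)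
  have k2 := key z₂ (by simpa using hz₂)
  have hAB : (A + B) * (z₂ - z₁) = 0 := by linear_combination k2 - k1
  have hz : z₂ - z₁ ≠ 0 := sub_ne_zero.mpr hne
  have hABz : A + B = 0 := by
    rcases mul_eq_zero.mp hAB with h' | h'
    · exact h'
    · exact absurd h' hz
  rw [shuffles, List.map_append, List.sum_append, List.map_map, List.map_map]
  have e1 : PTfun σ ∘ (x :: ·) = fun w => PTfun σ (x :: w) := rfl
  have e2 : PTfun σ ∘ (y :: ·) = fun w => PTfun σ (y :: w) := rfl
  rw [e1, e2, ← hA, ← hB]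
  exact hABz
end

section
/- The Parke–Taylor forms satisfy the Kleiss–Kuijf relations: for any words a, b, PT_{a1b} = (-1)^{|a|} PT_{1(ā ⧢ b)}, where PT is extended linearly. -/
noncomputable def Dk (l : List ℂ) : ℂ := ((l.zip l.tail).map fun p => p.1 - p.2).prod

@[simp] lemma Dk_nil : Dk [] = 1 := rfl
@[simp] lemma Dk_single (x : ℂ) : Dk [x] = 1 := rfl
lemma Dk_cons_cons (x y : ℂ) (l : List ℂ) : Dk (x :: y :: l) = (x - y) * Dk (y :: l) := rfl

lemma Dfact : ∀ (s : List ℂ) (x : ℂ) (t : List ℂ),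
    Dk (s ++ x :: t) = Dk (s ++ [x]) * Dk (x :: t)
  | [], x, t => by simp
  | [a], x, t => by simp [Dk_cons_cons]
  | a :: c :: s, x, t => by
      have h := Dfact (c :: s) x t
      simp only [List.cons_append, Dk_cons_cons] at *
      rw [h]; ring

lemma Drev : ∀ (l : List ℂ) (x : ℂ),
    Dk (l.reverse ++ [x]) = (-1) ^ l.length * Dk (x :: l)
  | [], x => by simp
  | y :: l, x => by
      have h1 : (y :: l).reverse ++ [x] = l.reverse ++ y :: [x] := by simp
      rw [h1, Dfact l.reverse y [x], Drev l y, Dk_cons_cons x y l, Dk_cons_cons y x []]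
      simp [pow_succ]
      ring

lemma Dk_ne_zero : ∀ (l : List ℂ), l.Pairwise (· ≠ ·) → Dk l ≠ 0
  | [], _ => one_ne_zero
  | [x], _ => one_ne_zero
  | x :: y :: l, h => by
      rw [Dk_cons_cons]
      exact mul_ne_zero (sub_ne_zero.2 (List.rel_of_pairwise_cons h (by simp)))
        (Dk_ne_zero (y :: l) h.tail)

lemma shuffles_perm {α : Type*} : ∀ (p q c : List α), c ∈ shuffles p q → (p ++ q).Perm c
  | [], q, c, h => by simp [shuffles] at h; simp [h]
  | a :: as, [], c, h => by simp [shuffles] at h; simp [h]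
  | a :: as, b :: bs, c, h => by
      simp only [shuffles, List.mem_append, List.mem_map] at h
      rcases h with ⟨c', hc', rfl⟩ | ⟨c', hc', rfl⟩
      · exact (shuffles_perm as (b :: bs) c' hc').cons a
      · exact (List.perm_middle (l₁ := a :: as)).trans ((shuffles_perm (a :: as) bs c' hc').cons b)

lemma shuffles_map {α β : Type*} (f : α → β) :
    ∀ (p q : List α), shuffles (p.map f) (q.map f) = (shuffles p q).map (List.map f)
  | [], q => by simp [shuffles]
  | a :: as, [] => by simp [shuffles]
  | a :: as, b :: bs => by
      simp only [List.map_cons, shuffles]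
      rw [show (f b :: List.map f bs) = List.map f (b :: bs) from rfl,
        show (f a :: List.map f as) = List.map f (a :: as) from rfl,
        shuffles_map f as (b :: bs), shuffles_map f (a :: as) bs]
      simp [Function.comp_def]

lemma fracKK (A B x y z w : ℂ) (hA : A ≠ 0) (hB : B ≠ 0)
    (hxy : x ≠ y) (hxz : x ≠ z) (hzy : z ≠ y) :
    (z - x)⁻¹ * (w * (A * ((x - y) * B))⁻¹) + (z - y)⁻¹ * (w * -1 * (A * ((x - y) * B))⁻¹)
      = w * -1 * (A * ((x - z) * ((z - y) * B)))⁻¹ := by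
  have h1 : x - y ≠ 0 := sub_ne_zero.2 hxy
  have h2 : x - z ≠ 0 := sub_ne_zero.2 hxz
  have h3 : z - y ≠ 0 := sub_ne_zero.2 hzy
  have h4 : z - x ≠ 0 := by rw [← neg_sub]; exact neg_ne_zero.2 h2
  have key3 : (z - x)⁻¹ * (x - y)⁻¹ + (z - y)⁻¹ * -((x - y)⁻¹) = -((x - z)⁻¹ * (z - y)⁻¹) := by
    field_simp
    ring
  simp only [mul_inv]
  linear_combination (w * A⁻¹ * B⁻¹) * key3

lemma keyKK : ∀ (p q : List ℂ) (z : ℂ),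
    (z :: (p ++ q)).Pairwise (· ≠ ·) →
    ((shuffles p q).map fun c => (Dk (z :: c))⁻¹).sum
      = (-1) ^ p.length * (Dk (p.reverse ++ z :: q))⁻¹
  | [], q, z, h => by simp [shuffles]
  | a :: as, [], z, h => by
      simp only [shuffles, List.map_cons, List.map_nil, List.sum_cons, List.sum_nil, add_zero]
      rw [show ((a :: as).reverse ++ z :: ([] : List ℂ)) = (a :: as).reverse ++ [z] from rfl,
        Drev (a :: as) z, mul_inv]
      rw [← mul_assoc, mul_inv_cancel₀ (pow_ne_zero _ (by norm_num : (-1:ℂ) ≠ 0)), one_mul]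
  | a :: as, b :: bs, z, h => by
      have hza : z ≠ a := List.rel_of_pairwise_cons h (by simp)
      have hzb : z ≠ b := List.rel_of_pairwise_cons h (by simp)
      have h1 : (a :: (as ++ b :: bs)).Pairwise (· ≠ ·) := h.tail
      have hperm : ((a :: as) ++ b :: bs).Perm (b :: ((a :: as) ++ bs)) := List.perm_middle
      have h2 : (b :: ((a :: as) ++ bs)).Pairwise (· ≠ ·) :=
        (hperm.pairwise_iff (by intro x y hxy; exact hxy.symm)).1 h.tail
      have hab : a ≠ b := List.rel_of_pairwise_cons h1 (by simp)
      have hA : Dk (as.reverse ++ [a]) ≠ 0 := by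
        rw [Drev]
        refine mul_ne_zero (pow_ne_zero _ (by norm_num)) (Dk_ne_zero _ ?_)
        exact h1.sublist ((as.sublist_append_left (b :: bs)).cons_cons a)
      have hB : Dk (b :: bs) ≠ 0 := by
        refine Dk_ne_zero _ (h2.sublist (List.cons_sublist_cons.2 ?_))
        exact List.sublist_append_right _ _
      have ih1 := keyKK as (b :: bs) a h1
      have ih2 := keyKK (a :: as) bs b h2
      simp only [shuffles, List.map_append, List.map_map, List.sum_append, Function.comp_def,
        Dk_cons_cons, mul_inv]
      rw [List.sum_map_mul_left, List.sum_map_mul_left, ih1, ih2]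
      have e1 : Dk (as.reverse ++ a :: b :: bs) = Dk (as.reverse ++ [a]) * ((a - b) * Dk (b :: bs)) := by
        rw [Dfact, Dk_cons_cons]
      have e2 : Dk ((a :: as).reverse ++ b :: bs) = Dk (as.reverse ++ [a]) * ((a - b) * Dk (b :: bs)) := by
        rw [show (a :: as).reverse ++ b :: bs = as.reverse ++ a :: b :: bs by simp, e1]
      have e3 : Dk ((a :: as).reverse ++ z :: b :: bs)
          = Dk (as.reverse ++ [a]) * ((a - z) * ((z - b) * Dk (b :: bs))) := by
        rw [show (a :: as).reverse ++ z :: b :: bs = as.reverse ++ a :: z :: b :: bs by simp,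
          Dfact, Dk_cons_cons, Dk_cons_cons]
      rw [e1, e2, e3]
      simp only [List.length_cons, pow_succ]
      linear_combination fracKK (Dk (as.reverse ++ [a])) (Dk (b :: bs)) a b z
        ((-1 : ℂ) ^ as.length) hA hB hab (Ne.symm hza) hzb
  termination_by p q => p.length + q.length

lemma PTfun_eq_Dk {m : ℕ} (σ : Fin m → ℂ) (a : List (Fin m)) :
    PTfun σ a = (Dk (a.map σ))⁻¹ := by
  unfold PTfun Dk
  rw [← List.map_tail, List.zip_map, List.map_map]
  rfl

/-- Kleiss–Kuijf for Parke–Taylor forms: `PT_{a1b} = (-1)^{|a|} PT_{1(ā⧢b)}`,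
where the letter `1` is `0 : Fin (n-1)` and `PT` is extended linearly over formal sums. -/
theorem stmt15 (n : ℕ) [NeZero (n - 1)] (σ : Fin (n - 1) → ℂ) (hσ : Function.Injective σ)
    (a b : List (Fin (n - 1)))
    (h : (a ++ (0 : Fin (n - 1)) :: b).Perm (List.finRange (n - 1))) :
    PTfun σ (a ++ (0 : Fin (n - 1)) :: b) =
      (-1 : ℂ) ^ a.length *
        ((shuffles a.reverse b).map fun c => PTfun σ ((0 : Fin (n - 1)) :: c)).sum := by
  classical
  have hnd : (a ++ (0 : Fin (n - 1)) :: b).Nodup :=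
    (h.nodup_iff).2 (List.nodup_finRange _)
  have hperm1 : (a ++ (0 : Fin (n - 1)) :: b).Perm ((0 : Fin (n - 1)) :: (a.reverse ++ b)) :=
    List.perm_middle.trans ((( a.reverse_perm.symm).append_right b).cons _)
  have hnd2 : ((0 : Fin (n - 1)) :: (a.reverse ++ b)).Nodup := hperm1.nodup_iff.1 hnd
  have hpw : (σ 0 :: (a.reverse.map σ ++ b.map σ)).Pairwise (· ≠ ·) := by
    have h0 : ((0 : Fin (n - 1)) :: (a.reverse ++ b)).Pairwise (fun x y => σ x ≠ σ y) :=
      hnd2.imp (fun hne hc => hne (hσ hc))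
    have := List.pairwise_map.2 h0
    simpa using this
  have hk := keyKK (a.reverse.map σ) (b.map σ) (σ 0) hpw
  rw [shuffles_map σ a.reverse b, List.map_map] at hk
  have hL : ((shuffles a.reverse b).map
      ((fun c => (Dk (σ 0 :: c))⁻¹) ∘ List.map σ)).sum
      = ((shuffles a.reverse b).map fun c => PTfun σ ((0 : Fin (n - 1)) :: c)).sum := by
    congr 1
    refine List.map_congr_left fun c _ => ?_
    simp [Function.comp, PTfun_eq_Dk]
  have hR : (a.reverse.map σ).reverse ++ σ 0 :: b.map σ
      = (a ++ (0 : Fin (n - 1)) :: b).map σ := by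
    simp
  rw [hL, hR] at hk
  rw [PTfun_eq_Dk, hk, ← mul_assoc, List.length_map, List.length_reverse, ← mul_pow]
  norm_num
end

section
/- The non-crossing identity for dihedral coordinates: for the cross-ratios u_{ij} = (σ_{i}σ_{j-1} difference products) on the configuration of n points on the line with standard ordering, u_{ij} = 1 - ∏_{(k,l) crossing (i,j)} u_{kl}, where the product is over chords (k,l) of the n-gon crossing the chord (i,j). -/
/-- The dihedral coordinate (cross-ratio) attached to the chord `(k,l)` of the `n`-gon
with vertices labelled `1,…,n` (with the cyclic convention `σ 0 = σ n`):
`u_{kl} = (σ_k − σ_{l-1})(σ_{k-1} − σ_l) / ((σ_k − σ_l)(σ_{k-1} − σ_{l-1}))`. -/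
noncomputable def uCross (σ : ℕ → ℂ) (k l : ℕ) : ℂ :=
  ((σ k - σ (l - 1)) * (σ (k - 1) - σ l)) / ((σ k - σ l) * (σ (k - 1) - σ (l - 1)))

/-- The set of chords `(k,l)`, `k < l`, of the `n`-gon crossing the chord `(i,j)`:
exactly one of `k`, `l` lies strictly between `i` and `j` (and neither equals `i` or `j`). -/
def crossSet (n i j : ℕ) : Finset (ℕ × ℕ) :=
  ((Finset.Icc 1 n) ×ˢ (Finset.Icc 1 n)).filter fun p =>
    (i < p.1 ∧ p.1 < j ∧ j < p.2) ∨ (p.1 < i ∧ i < p.2 ∧ p.2 < j)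

private theorem tele1 (f : ℕ → ℂ) (a : ℕ) : ∀ b, a ≤ b → (∀ m, a ≤ m → m ≤ b → f m ≠ 0) →
    ∏ l ∈ Finset.Ioc a b, f (l - 1) / f l = f a / f b := by
  intro b
  induction b with
  | zero =>
    intro hab h; interval_cases a
    rw [Finset.Ioc_self, Finset.prod_empty]
    exact (div_self (h 0 le_rfl le_rfl)).symm
  | succ b ih =>
    intro hab h
    rcases Nat.lt_or_ge a (b+1) with hlt | hge
    · have hab' : a ≤ b := by omega
      rw [Finset.prod_Ioc_succ_top hab', ih hab' (fun m h1 h2 => h m h1 (by omega))]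
      have hb : f b ≠ 0 := h b hab' (by omega)
      simp only [Nat.add_sub_cancel]
      rw [div_mul_div_comm, mul_comm (f a) (f b), mul_div_mul_left _ _ hb]
    · have ha : a = b + 1 := by omega
      subst ha
      rw [Finset.Ioc_eq_empty (by omega), Finset.prod_empty]
      exact (div_self (h _ le_rfl le_rfl)).symm

theorem tele2 (f : ℕ → ℂ) (a b : ℕ) (hab : a ≤ b) (h : ∀ m, a ≤ m → m ≤ b → f m ≠ 0) :
    ∏ l ∈ Finset.Ioc a b, f l / f (l - 1) = f b / f a := by
  have h2 : ∀ l ∈ Finset.Ioc a b, f l / f (l-1) = (f (l-1) / f l)⁻¹ := by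
    intro l _; rw [inv_div]
  rw [Finset.prod_congr rfl h2, Finset.prod_inv_distrib, tele1 f a b hab h, inv_div]


/-- non-crossing identity: for distinct points `σ_1,…,σ_n` and a chord
`(i,j)` of the `n`-gon, `u_{ij} = 1 − ∏_{(k,l) crossing (i,j)} u_{kl}`. -/
theorem stmt17 (n : ℕ) (hn : 4 ≤ n) (σ : ℕ → ℂ) (hcyc : σ 0 = σ n)
    (hdist : ∀ k l, 1 ≤ k → k < l → l ≤ n → σ k ≠ σ l)
    (i j : ℕ) (hi : 1 ≤ i) (hij : i + 1 < j) (hj : j ≤ n) (hne : ¬(i = 1 ∧ j = n)) :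
    uCross σ i j = 1 - ∏ p ∈ crossSet n i j, uCross σ p.1 p.2 := by
  have hne1 : ∀ k l, 1 ≤ k → k < l → l ≤ n → σ k - σ l ≠ 0 :=
    fun k l h1 h2 h3 => sub_ne_zero.mpr (hdist k l h1 h2 h3)
  have hne2 : ∀ k l, 1 ≤ k → k < l → l ≤ n → σ l - σ k ≠ 0 :=
    fun k l h1 h2 h3 => sub_ne_zero.mpr (Ne.symm (hdist k l h1 h2 h3))
  have hne0 : ∀ l, 1 ≤ l → l < n → σ 0 - σ l ≠ 0 := by
    intro l h1 h2; rw [hcyc]; exact hne2 l n h1 h2 le_rfl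
  have hset : crossSet n i j =
      (Finset.Ioo i j ×ˢ Finset.Ioc j n) ∪ (Finset.Ico 1 i ×ˢ Finset.Ioo i j) := by
    ext p
    simp only [crossSet, Finset.mem_filter, Finset.mem_product, Finset.mem_Icc,
      Finset.mem_union, Finset.mem_Ioo, Finset.mem_Ioc, Finset.mem_Ico]
    omega
  have hdisj : Disjoint (Finset.Ioo i j ×ˢ Finset.Ioc j n) (Finset.Ico 1 i ×ˢ Finset.Ioo i j) := by
    rw [Finset.disjoint_left]
    intro p hp hq
    simp only [Finset.mem_product, Finset.mem_Ioo, Finset.mem_Ioc, Finset.mem_Ico] at hp hq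
    omega
  have hIooA : Finset.Ioo i j = Finset.Ioc i (j-1) := by
    ext x; simp only [Finset.mem_Ioo, Finset.mem_Ioc]; omega
  have hIcoB : Finset.Ico 1 i = Finset.Ioc 0 (i-1) := by
    ext x; simp only [Finset.mem_Ico, Finset.mem_Ioc]; omega
  have hA : ∏ k ∈ Finset.Ioo i j, ∏ l ∈ Finset.Ioc j n, uCross σ k l
      = ((σ (j-1) - σ j) * (σ i - σ n)) / ((σ i - σ j) * (σ (j-1) - σ n)) := by
    rw [hIooA]
    have hinner : ∀ k ∈ Finset.Ioc i (j-1), ∏ l ∈ Finset.Ioc j n, uCross σ k l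
        = ((σ k - σ j)/(σ (k-1) - σ j)) * ((σ (k-1) - σ n)/(σ k - σ n)) := by
      intro k hk
      simp only [Finset.mem_Ioc] at hk
      have e : ∀ l ∈ Finset.Ioc j n, uCross σ k l
          = ((σ k - σ (l-1))/(σ k - σ l)) * ((σ (k-1) - σ l)/(σ (k-1) - σ (l-1))) := by
        intro l _; simp only [uCross, div_mul_div_comm]
      rw [Finset.prod_congr rfl e, Finset.prod_mul_distrib]
      have t1 := tele1 (fun l => σ k - σ l) j n (by omega)
        (fun m h1 h2 => hne1 k m (by omega) (by omega) h2)
      have t2 := tele2 (fun l => σ (k-1) - σ l) j n (by omega)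
        (fun m h1 h2 => hne1 (k-1) m (by omega) (by omega) h2)
      rw [t1, t2]; ring
    rw [Finset.prod_congr rfl hinner, Finset.prod_mul_distrib]
    have t1 := tele2 (fun k => σ k - σ j) i (j-1) (by omega)
      (fun m h1 h2 => hne1 m j (by omega) (by omega) hj)
    have t2 := tele1 (fun k => σ k - σ n) i (j-1) (by omega)
      (fun m h1 h2 => hne1 m n (by omega) (by omega) le_rfl)
    rw [t1, t2, div_mul_div_comm]
  have hB : ∏ k ∈ Finset.Ico 1 i, ∏ l ∈ Finset.Ioo i j, uCross σ k l
      = ((σ (i-1) - σ i) * (σ 0 - σ (j-1))) / ((σ 0 - σ i) * (σ (i-1) - σ (j-1))) := by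
    rw [hIcoB, hIooA]
    have hinner : ∀ k ∈ Finset.Ioc 0 (i-1), ∏ l ∈ Finset.Ioc i (j-1), uCross σ k l
        = ((σ k - σ i)/(σ (k-1) - σ i)) * ((σ (k-1) - σ (j-1))/(σ k - σ (j-1))) := by
      intro k hk
      simp only [Finset.mem_Ioc] at hk
      have e : ∀ l ∈ Finset.Ioc i (j-1), uCross σ k l
          = ((σ k - σ (l-1))/(σ k - σ l)) * ((σ (k-1) - σ l)/(σ (k-1) - σ (l-1))) := by
        intro l _; simp only [uCross, div_mul_div_comm]
      rw [Finset.prod_congr rfl e, Finset.prod_mul_distrib]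
      have t1 := tele1 (fun l => σ k - σ l) i (j-1) (by omega)
        (fun m h1 h2 => hne1 k m (by omega) (by omega) (by omega))
      have t2 := tele2 (fun l => σ (k-1) - σ l) i (j-1) (by omega)
        (fun m h1 h2 => by
          rcases Nat.eq_zero_or_pos (k-1) with h0 | h0
          · rw [h0]; exact hne0 m (by omega) (by omega)
          · exact hne1 (k-1) m h0 (by omega) (by omega))
      rw [t1, t2]; ring
    rw [Finset.prod_congr rfl hinner, Finset.prod_mul_distrib]
    have t1 := tele2 (fun k => σ k - σ i) 0 (i-1) (by omega)
      (fun m h1 h2 => by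
        rcases Nat.eq_zero_or_pos m with h0 | h0
        · rw [h0]; exact hne0 i hi (by omega)
        · exact hne1 m i h0 (by omega) (by omega))
    have t2 := tele1 (fun k => σ k - σ (j-1)) 0 (i-1) (by omega)
      (fun m h1 h2 => by
        rcases Nat.eq_zero_or_pos m with h0 | h0
        · rw [h0]; exact hne0 (j-1) (by omega) (by omega)
        · exact hne1 m (j-1) h0 (by omega) (by omega))
    rw [t1, t2, div_mul_div_comm]
  rw [hset, Finset.prod_union hdisj, Finset.prod_product', Finset.prod_product', hA, hB, hcyc]
  have h1 : σ i - σ j ≠ 0 := hne1 i j hi (by omega) hj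
  have h2 : σ (i-1) - σ (j-1) ≠ 0 := by
    rcases Nat.eq_zero_or_pos (i-1) with h0 | h0
    · rw [h0, hcyc]; exact hne2 (j-1) n (by omega) (by omega) le_rfl
    · exact hne1 (i-1) (j-1) h0 (by omega) (by omega)
  have h3 : σ n - σ i ≠ 0 := hne2 i n hi (by omega) le_rfl
  have h4 : σ (j-1) - σ n ≠ 0 := hne1 (j-1) n (by omega) (by omega) le_rfl
  simp only [uCross]
  field_simp
  ring
end
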